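/- Let F be a spreading linear triple system on a finite set V with |V| = n > 5, and suppose T, T' ∈ F are adjacent triples. Then the number of triples T'' ∈ F that are adjacent to T' is at most C(n − Val(T) − 1, 2), where C(k,2) = k(k−1)/2 for k ≥ 2 and C(k,2) = 0 otherwise. -/

import Mathlib

open Finset

variable {α : Type*}

/-- A pair of (distinct) vertices is covered if it lies in some triple of `F`. -/
def Covered [DecidableEq α] (F : Finset (Finset α)) (x y : α) : Prop :=
  ∃ T ∈ F, x ∈ T ∧ y ∈ T

instance [DecidableEq α] (F : Finset (Finset α)) (x y : α) : Decidable (Covered F x y) :=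
  inferInstanceAs (Decidable (∃ T ∈ F, x ∈ T ∧ y ∈ T))

/-- Linear triple system on `V`. -/
def IsLinearTS [DecidableEq α] (V : Finset α) (F : Finset (Finset α)) : Prop :=
  (∀ T ∈ F, T ⊆ V ∧ T.card = 3) ∧
    ∀ x ∈ V, ∀ y ∈ V, x ≠ y → (F.filter fun T => x ∈ T ∧ y ∈ T).card ≤ 1

/-- Steiner triple system on `V`. -/
def IsSTS [DecidableEq α] (V : Finset α) (F : Finset (Finset α)) : Prop :=
  (∀ T ∈ F, T ⊆ V ∧ T.card = 3) ∧
    ∀ x ∈ V, ∀ y ∈ V, x ≠ y → (F.filter fun T => x ∈ T ∧ y ∈ T).card = 1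

/-- Neighbourhood of `V'` with respect to the triple system `F` on `V`. -/
def nbhd [DecidableEq α] (V : Finset α) (F : Finset (Finset α)) (V' : Finset α) : Finset α :=
  (V \ V').filter fun z => ∃ x ∈ V', ∃ y ∈ V', x ≠ y ∧ ({x, y, z} : Finset α) ∈ F

/-- `F` is spreading: the closure of every nontrivial subset is `V`. -/
def IsSpreading [DecidableEq α] (V : Finset α) (F : Finset (Finset α)) : Prop :=
  ∀ V' ⊆ V, 3 ≤ V'.card → V' ∉ F →
    ∀ W, V' ⊆ W → W ⊆ V → nbhd V F W = ∅ → W = V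

/-- `F` is weakly spreading. -/
def IsWeaklySpreading [DecidableEq α] (V : Finset α) (F : Finset (Finset α)) : Prop :=
  ∀ F' ⊆ F, 2 ≤ F'.card →
    ∀ W, F'.biUnion id ⊆ W → W ⊆ V → nbhd V F W = ∅ → W = V

/-- `Val(T)`: number of private neighbours of the triple `T`. -/
def valT [DecidableEq α] (V : Finset α) (F : Finset (Finset α)) (T : Finset α) : ℕ :=
  ((V \ T).filter fun v => (T.filter fun t => Covered F v t).card = 1).card

/-- Two triples are adjacent if pairs of each span a `C₄` in the complement of the skeleton. -/
def AdjT [DecidableEq α] (F : Finset (Finset α)) (T T' : Finset α) : Prop :=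
  ∃ v₁ ∈ T, ∃ v₂ ∈ T, ∃ u₁ ∈ T', ∃ u₂ ∈ T',
    v₁ ≠ v₂ ∧ u₁ ≠ u₂ ∧ v₁ ≠ u₁ ∧ v₁ ≠ u₂ ∧ v₂ ≠ u₁ ∧ v₂ ≠ u₂ ∧
    ¬Covered F v₁ u₁ ∧ ¬Covered F u₁ v₂ ∧ ¬Covered F v₂ u₂ ∧ ¬Covered F u₂ v₁

instance [DecidableEq α] (F : Finset (Finset α)) (T T' : Finset α) : Decidable (AdjT F T T') :=
  inferInstanceAs (Decidable (∃ v₁ ∈ T, ∃ v₂ ∈ T, ∃ u₁ ∈ T', ∃ u₂ ∈ T',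
    v₁ ≠ v₂ ∧ u₁ ≠ u₂ ∧ v₁ ≠ u₁ ∧ v₁ ≠ u₂ ∧ v₂ ≠ u₁ ∧ v₂ ≠ u₂ ∧
    ¬Covered F v₁ u₁ ∧ ¬Covered F u₁ v₂ ∧ ¬Covered F v₂ u₂ ∧ ¬Covered F u₂ v₁))

/-- `C(k,2) = k(k-1)/2` for `k ≥ 2`, and `0` otherwise. -/
def c2 (k : ℤ) : ℤ := if 2 ≤ k then k * (k - 1) / 2 else 0

/-!
Write `T = {v₁, v₂, v₃}`, where `v₁, v₂` together with `u₁, u₂ ∈ T'` witness the adjacency.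
Spreading forbids three pairwise uncovered vertices (their closure would be themselves) and,
on more than four vertices, forces every vertex outside a triple to be covered with one of
its vertices (otherwise the triple plus that vertex would be closed). So `u₁, u₂` are covered
with `v₃` only. A triple `T''` adjacent to `T'` contains two vertices uncovered with a common
`x ∈ {u₁, u₂}`; both are then covered with `v₁` and `v₂`, hence are neither `v₃` (which is
covered with `x`) nor private neighbours of `T`. By linearity `T''` is determined by these two
vertices, which range over a set of `n - Val(T) - 1` vertices.
-/

section

variable [DecidableEq α] {V : Finset α} {F : Finset (Finset α)}

theorem Finset.exists_eq_triple_of_card_eq_three {T : Finset α} (hT : T.card = 3) {a b : α}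
    (ha : a ∈ T) (hb : b ∈ T) (hab : a ≠ b) : ∃ c, T = {a, b, c} := by
  obtain ⟨c, hc⟩ : (T \ {a, b}).Nonempty := by
    rw [← card_pos, card_sdiff_of_subset (insert_subset ha (singleton_subset_iff.2 hb)), hT,
      card_pair hab]
    norm_num
  obtain ⟨hcT, hcab⟩ := mem_sdiff.1 hc
  simp only [mem_insert, mem_singleton, not_or] at hcab
  refine ⟨c, (eq_of_subset_of_card_le ?_ ?_).symm⟩
  · simp [insert_subset_iff, ha, hb, hcT]
  · rw [hT, card_eq_three.2 ⟨a, b, c, hab, Ne.symm hcab.1, Ne.symm hcab.2, rfl⟩]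

theorem Covered.symm {x y : α} (h : Covered F x y) : Covered F y x :=
  let ⟨T, hT, hx, hy⟩ := h
  ⟨T, hT, hy, hx⟩

theorem covered_comm {x y : α} : Covered F x y ↔ Covered F y x :=
  ⟨Covered.symm, Covered.symm⟩

theorem AdjT.exists_pairs {T T' : Finset α} (h : AdjT F T T') :
    ∃ P ⊆ T, ∃ Q ⊆ T', P.card = 2 ∧ Q.card = 2 ∧ ∀ v ∈ P, ∀ u ∈ Q, ¬Covered F u v := by
  obtain ⟨v₁, hv₁, v₂, hv₂, u₁, hu₁, u₂, hu₂, hv, hu, -, -, -, -, h₁₁, h₁₂, h₂₂, h₂₁⟩ := h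
  refine ⟨{v₁, v₂}, by simp [insert_subset_iff, hv₁, hv₂], {u₁, u₂},
    by simp [insert_subset_iff, hu₁, hu₂], card_pair hv, card_pair hu, ?_⟩
  simp only [mem_insert, mem_singleton]
  rintro v (rfl | rfl) u (rfl | rfl) <;> simp only [covered_comm] at * <;> assumption

theorem nbhd_eq_empty_of_forall_not_covered {W : Finset α}
    (h : ∀ p ∈ W, ∀ q ∈ W, p ≠ q → ¬Covered F p q) : nbhd V F W = ∅ :=
  filter_eq_empty_iff.2 fun _ _ ⟨p, hp, q, hq, hpq, hF⟩ =>
    h p hp q hq hpq ⟨_, hF, by simp, by simp⟩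

theorem IsLinearTS.eq_of_mem_of_mem (hL : IsLinearTS V F) {T₁ T₂ : Finset α} (h₁ : T₁ ∈ F)
    (h₂ : T₂ ∈ F) {x y : α} (hxy : x ≠ y) (hx₁ : x ∈ T₁) (hy₁ : y ∈ T₁) (hx₂ : x ∈ T₂)
    (hy₂ : y ∈ T₂) : T₁ = T₂ :=
  card_le_one.1 (hL.2 x ((hL.1 T₁ h₁).1 hx₁) y ((hL.1 T₁ h₁).1 hy₁) hxy) T₁
    (mem_filter.2 ⟨h₁, hx₁, hy₁⟩) T₂ (mem_filter.2 ⟨h₂, hx₂, hy₂⟩)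

theorem IsLinearTS.card_le_choose_two (hL : IsLinearTS V F) {G : Finset (Finset α)}
    {U : Finset α} (hG : G ⊆ F) (hU : ∀ T ∈ G, 2 ≤ (T ∩ U).card) :
    G.card ≤ U.card.choose 2 := by
  choose! P hPT hP using fun T hT => exists_subset_card_eq (hU T hT)
  rw [← card_powersetCard]
  refine card_le_card_of_injOn P (fun T hT => mem_powersetCard.2
    ⟨(hPT T hT).trans inter_subset_right, hP T hT⟩) fun T₁ h₁ T₂ h₂ hP₁₂ => ?_
  obtain ⟨x, y, hxy, hPxy⟩ := card_eq_two.1 (hP T₁ h₁)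
  have hsub₁ : {x, y} ⊆ T₁ := hPxy ▸ (hPT T₁ h₁).trans inter_subset_left
  have hsub₂ : {x, y} ⊆ T₂ := hPxy ▸ hP₁₂ ▸ (hPT T₂ h₂).trans inter_subset_left
  exact hL.eq_of_mem_of_mem (hG h₁) (hG h₂) hxy (hsub₁ (by simp)) (hsub₁ (by simp))
    (hsub₂ (by simp)) (hsub₂ (by simp))

theorem IsSpreading.covered_of_not_covered (hS : IsSpreading V F) (hcard : 3 < V.card)
    {x y z : α} (hx : x ∈ V) (hy : y ∈ V) (hz : z ∈ V) (hxy : x ≠ y) (hxz : x ≠ z)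
    (hyz : y ≠ z) (h₁ : ¬Covered F x y) (h₂ : ¬Covered F y z) : Covered F x z := by
  by_contra h₃
  have hW : ({x, y, z} : Finset α).card = 3 := card_eq_three.2 ⟨x, y, z, hxy, hxz, hyz, rfl⟩
  have hWV : {x, y, z} ⊆ V := by simp [insert_subset_iff, hx, hy, hz]
  have hclosed : nbhd V F {x, y, z} = ∅ := by
    refine nbhd_eq_empty_of_forall_not_covered fun p hp q hq hpq => ?_
    simp only [mem_insert, mem_singleton] at hp hq
    rcases hp with rfl | rfl | rfl <;> rcases hq with rfl | rfl | rfl <;>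
      simp_all [covered_comm]
  have := congrArg card <|
    hS _ hWV hW.ge (fun hF => h₁ ⟨_, hF, by simp, by simp⟩) _ Subset.rfl hWV hclosed
  omega

theorem IsSpreading.exists_covered_of_notMem (hS : IsSpreading V F) (hL : IsLinearTS V F)
    (hcard : 4 < V.card) {T : Finset α} {v : α} (hT : T ∈ F) (hv : v ∈ V) (hvT : v ∉ T) :
    ∃ t ∈ T, Covered F v t := by
  by_contra! h
  obtain ⟨hTV, hT3⟩ := hL.1 T hT
  have hW : (insert v T).card = 4 := by rw [card_insert_of_notMem hvT, hT3]
  have hWV : insert v T ⊆ V := insert_subset hv hTV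
  -- a triple meeting `T` in two vertices is `T` itself, and none meets `v` and `T`
  have hclosed : nbhd V F (insert v T) = ∅ := by
    refine filter_eq_empty_iff.2 fun w hw ⟨p, hp, q, hq, hpq, hF⟩ => (mem_sdiff.1 hw).2 ?_
    have hcov : Covered F p q := ⟨_, hF, by simp, by simp⟩
    rcases mem_insert.1 hp with rfl | hpT
    · exact absurd hcov (h q ((mem_insert.1 hq).resolve_left hpq.symm))
    rcases mem_insert.1 hq with rfl | hqT
    · exact absurd hcov.symm (h p hpT)
    rw [hL.eq_of_mem_of_mem hT hF hpq hpT hqT (by simp) (by simp)]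
    simp
  have := congrArg card <|
    hS _ hWV (by omega) (fun hF => by have := (hL.1 _ hF).2; omega) _ Subset.rfl hWV hclosed
  omega

def privateNbrs (V : Finset α) (F : Finset (Finset α)) (T : Finset α) : Finset α :=
  (V \ T).filter fun v => (T.filter fun t => Covered F v t).card = 1

theorem valT_eq_card_privateNbrs (T : Finset α) : valT V F T = (privateNbrs V F T).card := rfl

theorem IsSpreading.mem_of_not_covered (hS : IsSpreading V F) (hL : IsLinearTS V F)
    (hcard : 4 < V.card) {v₁ v₂ v₃ x w : α} {T : Finset α} (hv : {v₁, v₂, v₃} ∈ F)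
    (hv₁₂ : v₁ ≠ v₂) (hx : x ∈ V) (hx₁ : ¬Covered F x v₁) (hx₂ : ¬Covered F x v₂)
    (hT : T ∈ F) (hw : w ∈ T) (hwx : ¬Covered F w x) :
    w ∈ V \ insert v₃ (privateNbrs V F {v₁, v₂, v₃}) := by
  have hvV := (hL.1 _ hv).1
  have hxv : x ∉ ({v₁, v₂, v₃} : Finset α) := fun h => hx₁ ⟨_, hv, h, by simp⟩
  have hx₃ : Covered F x v₃ := by
    obtain ⟨t, ht, hxt⟩ := hS.exists_covered_of_notMem hL hcard hv hx hxv
    simp only [mem_insert, mem_singleton] at ht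
    rcases ht with rfl | rfl | rfl
    exacts [absurd hxt hx₁, absurd hxt hx₂, hxt]
  have hwV : w ∈ V := (hL.1 T hT).1 hw
  refine mem_sdiff.2 ⟨hwV, mem_insert.not.2 (not_or.2 ⟨fun h => hwx (h ▸ hx₃.symm), ?_⟩)⟩
  intro hwP
  obtain ⟨hwv, hw₁⟩ := mem_filter.1 hwP
  have hwv := (mem_sdiff.1 hwv).2
  have hcov : ∀ t ∈ ({v₁, v₂, v₃} : Finset α), ¬Covered F x t → Covered F w t :=
    fun t ht hxt => hS.covered_of_not_covered (by omega) hwV hx (hvV ht)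
      (fun h => hwx (h ▸ ⟨T, hT, hw, hw⟩)) (fun h => hwv (h ▸ ht)) (fun h => hxv (h ▸ ht))
      hwx hxt
  have : 1 < (filter (fun t => Covered F w t) {v₁, v₂, v₃}).card :=
    one_lt_card.2 ⟨v₁, mem_filter.2 ⟨by simp, hcov _ (by simp) hx₁⟩,
      v₂, mem_filter.2 ⟨by simp, hcov _ (by simp) hx₂⟩, hv₁₂⟩
  omega

end

theorem c2_natCast (k : ℕ) : c2 k = k.choose 2 := by
  rcases k with _ | _ | k
  · rfl
  · rfl
  · rw [c2, if_pos (by omega), Nat.choose_two_right]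
    push_cast
    ring_nf

/-- If `T, T'` are adjacent triples of a spreading linear triple system
on `n > 5` vertices, then `T'` has at most `C(n - Val(T) - 1, 2)` adjacent triples. -/
theorem statement_16 {α : Type*} [DecidableEq α] (V : Finset α) (F : Finset (Finset α))
    (n : ℕ) (hn : V.card = n) (hL : IsLinearTS V F) (hS : IsSpreading V F) (hV : 5 < n)
    (T T' : Finset α) (hT : T ∈ F) (hT' : T' ∈ F) (hAdj : AdjT F T T') :
    ((F.filter fun T'' => AdjT F T' T'').card : ℤ)
      ≤ c2 ((n : ℤ) - (valT V F T : ℤ) - 1) := by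
  obtain ⟨P, hPT, Q, hQT', hP, hQ, hPQ⟩ := hAdj.exists_pairs
  obtain ⟨v₁, v₂, hv₁₂, rfl⟩ := card_eq_two.1 hP
  obtain ⟨v₃, rfl⟩ :=
    exists_eq_triple_of_card_eq_three (hL.1 T hT).2 (hPT (by simp)) (hPT (by simp)) hv₁₂
  set U := V \ insert v₃ (privateNbrs V F {v₁, v₂, v₃})
  have hcount : (F.filter fun T'' => AdjT F T' T'').card ≤ U.card.choose 2 := by
    refine hL.card_le_choose_two (filter_subset _ _) fun T'' hT'' => ?_
    obtain ⟨hT''F, hadj⟩ := mem_filter.1 hT''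
    obtain ⟨Q', hQ'T', R, hRT'', hQ', hR, hQ'R⟩ := hadj.exists_pairs
    obtain ⟨x, hx⟩ := inter_nonempty_of_card_lt_card_add_card hQT' hQ'T'
      (by rw [(hL.1 T' hT').2, hQ, hQ']; norm_num)
    obtain ⟨hxQ, hxQ'⟩ := mem_inter.1 hx
    have hRU : R ⊆ T'' ∩ U := fun w hw => mem_inter.2 ⟨hRT'' hw,
      hS.mem_of_not_covered hL (by omega) hT hv₁₂ ((hL.1 T' hT').1 (hQT' hxQ))
        (hPQ _ (by simp) _ hxQ) (hPQ _ (by simp) _ hxQ) hT''F (hRT'' hw) (hQ'R x hxQ' w hw)⟩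
    exact hR ▸ card_le_card hRU
  have hU : U.card + valT V F {v₁, v₂, v₃} + 1 = n := by
    have hv₃ : v₃ ∉ privateNbrs V F {v₁, v₂, v₃} := fun h =>
      (mem_sdiff.1 (mem_filter.1 h).1).2 (by simp)
    have hsub : insert v₃ (privateNbrs V F {v₁, v₂, v₃}) ⊆ V :=
      insert_subset ((hL.1 _ hT).1 (by simp)) ((filter_subset _ _).trans sdiff_subset)
    have := card_le_card hsub
    rw [card_sdiff_of_subset hsub, card_insert_of_notMem hv₃, ← valT_eq_card_privateNbrs] at *
    omega
  calc ((F.filter fun T'' => AdjT F T' T'').card : ℤ) ≤ U.card.choose 2 := by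
        exact_mod_cast hcount
    _ = c2 ((n : ℤ) - (valT V F {v₁, v₂, v₃} : ℤ) - 1) := by
        rw [← c2_natCast]
        congr 1
        omega
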